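/- Exact doubly-robust (product-of-errors) remainder representation: fix an integer k ≥ 1, adopt the core setup and the candidate-nuisance setup with Y_j integrable, and let Q^{j,k,m} and φ_{j,k} denote the true iterated regression functions and functional. Then E_P[ φ̃ ] − φ_{j,k} = Σ_{m=1}^k E_P[ 1_{B_m} ( ĝ_m^{−1} − g_m^{−1} ) ( Q̄^m − Q̂^m ) ], where φ̃ := Σ_{m=1}^k 1_{B_m} ĝ_m^{−1}(Q̂^{m+1} − Q̂^m) + Q̂^1. In particular each summand vanishes if ĝ_m = g_m a.s. on B_m or Q̂^m = Q̄^m a.s. on B_m. -/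

import Mathlib

/-!
Write `I_m(X) = ∫_{B_m} X / g_m dP`. Since `p_m` is the conditional probability of `B_m` given
`𝒲_m` on `B_{m-1}` and `g_m = g_{m-1} p_m`, the tower property gives `I_m(X) = I_{m-1}(X)` for
`𝒲_m`-measurable `X`; the bound `p_m ≥ ε` moves integrability of such `X` from `B_m` to
`B_{m-1}`. If moreover `Z̄_m` regresses `Z_{m+1}` on `𝒲_m` over `B_m`, then
`I_m(Z̄_m) = I_m(Z_{m+1})`, so `Σ_m I_m(Z̄_m - Z_m)` telescopes to `I_k(Y) - E[Z_1]`.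
For `Z = Z̄ = Q` the sum vanishes, giving `φ = I_k(Y)`. In the estimator, the regression property
replaces `Q̂^{m+1}` by `Q̄^m` in the `m`-th term, and splitting `ĝ_m⁻¹ = (ĝ_m⁻¹ - g_m⁻¹) + g_m⁻¹`
leaves the remainder plus `Σ_m I_m(Q̄^m - Q̂^m) = I_k(Y) - E[Q̂^1]`.
-/

open MeasureTheory ProbabilityTheory

section CondExp

variable {Ω : Type*} {m mΩ : MeasurableSpace Ω}

theorem setIntegral_eq_measureReal_mul_integral_cond {P : Measure Ω} [IsFiniteMeasure P]
    (s : Set Ω) (f : Ω → ℝ) : ∫ ω in s, f ω ∂P = P.real s * ∫ ω, f ω ∂P[|s] := by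
  rcases eq_or_ne (P s) 0 with hs | hs
  · simp [Measure.restrict_eq_zero.2 hs, measureReal_def, hs]
  · rw [ProbabilityTheory.cond, integral_smul_measure, ENNReal.toReal_inv, smul_eq_mul,
      ← mul_assoc, measureReal_def,
      mul_inv_cancel₀ (ENNReal.toReal_ne_zero.2 ⟨hs, measure_ne_top _ _⟩), one_mul]

theorem integrable_cond_iff_integrableOn {P : Measure Ω} [IsFiniteMeasure P] {s : Set Ω}
    {f : Ω → ℝ} : Integrable f P[|s] ↔ IntegrableOn f s P := by
  rcases eq_or_ne (P s) 0 with hs | hs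
  · simp [IntegrableOn, Measure.restrict_eq_zero.2 hs, cond_eq_zero_of_meas_eq_zero hs]
  · exact integrable_smul_measure (by simp [measure_ne_top]) (by simpa using hs)

theorem mul_ae_eq_condExp_mul_of_ae_eq_condExp {μ : Measure Ω} [IsFiniteMeasure μ]
    {f X R : Ω → ℝ} (hf : StronglyMeasurable[m] f) (hX : Integrable X μ)
    (hfX : Integrable (fun ω => f ω * X ω) μ) (hR : R =ᵐ[μ] μ[X|m]) :
    (fun ω => f ω * R ω) =ᵐ[μ] μ[fun ω => f ω * X ω|m] := by
  filter_upwards [condExp_mul_of_stronglyMeasurable_left hf hfX hX, hR] with ω hfXω hRω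
  rw [hRω]
  exact hfXω.symm

theorem mul_indicator_one_eq_indicator (C : Set Ω) (F : Ω → ℝ) :
    (fun ω => F ω * C.indicator (fun _ => (1 : ℝ)) ω) = C.indicator F := by
  ext ω
  by_cases h : ω ∈ C <;> simp [h]

theorem MeasureTheory.IntegrableOn.indicator_of_subset {P : Measure Ω} {C D : Set Ω}
    {F : Ω → ℝ} (hC : MeasurableSet C) (hCD : C ⊆ D) (hF : IntegrableOn F C P) :
    IntegrableOn (C.indicator F) D P := by
  rwa [IntegrableOn, integrable_indicator_iff hC, IntegrableOn,
    Measure.restrict_restrict hC, Set.inter_eq_left.2 hCD]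

variable {P : Measure Ω} [IsFiniteMeasure P] {s : Set Ω} {f X R : Ω → ℝ}

theorem integrableOn_mul_of_ae_eq_condExp_cond (hf : StronglyMeasurable[m] f)
    (hX : IntegrableOn X s P) (hfX : IntegrableOn (fun ω => f ω * X ω) s P)
    (hR : R =ᵐ[P[|s]] P[|s][X|m]) : IntegrableOn (fun ω => f ω * R ω) s P := by
  rw [← integrable_cond_iff_integrableOn] at hX hfX ⊢
  exact integrable_condExp.congr (mul_ae_eq_condExp_mul_of_ae_eq_condExp hf hX hfX hR).symm

theorem setIntegral_mul_eq_of_ae_eq_condExp_cond (hm : m ≤ mΩ) (hf : StronglyMeasurable[m] f)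
    (hX : IntegrableOn X s P) (hfX : IntegrableOn (fun ω => f ω * X ω) s P)
    (hR : R =ᵐ[P[|s]] P[|s][X|m]) :
    ∫ ω in s, f ω * X ω ∂P = ∫ ω in s, f ω * R ω ∂P := by
  rw [← integrable_cond_iff_integrableOn] at hX hfX
  rw [setIntegral_eq_measureReal_mul_integral_cond, setIntegral_eq_measureReal_mul_integral_cond,
    ← integral_condExp hm,
    integral_congr_ae (mul_ae_eq_condExp_mul_of_ae_eq_condExp hf hX hfX hR).symm]

theorem setIntegral_mul_sub_eq_of_ae_eq_condExp_cond (hm : m ≤ mΩ) {w Z : Ω → ℝ} {c : ℝ}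
    (hw : StronglyMeasurable[m] w) (hwc : ∀ᵐ ω ∂P, ‖w ω‖ ≤ c) (hX : IntegrableOn X s P)
    (hZ : IntegrableOn Z s P) (hR : R =ᵐ[P[|s]] P[|s][X|m]) :
    ∫ ω in s, w ω * (X ω - Z ω) ∂P = ∫ ω in s, w ω * (R ω - Z ω) ∂P := by
  have hR' : IntegrableOn R s P :=
    integrable_cond_iff_integrableOn.1 (integrable_condExp.congr hR.symm)
  have hwY : ∀ {Y : Ω → ℝ}, IntegrableOn Y s P → IntegrableOn (fun ω => w ω * Y ω) s P :=
    fun hY => hY.bdd_mul (hw.mono hm).aestronglyMeasurable (ae_restrict_of_ae hwc)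
  simp only [mul_sub]
  rw [integral_sub (hwY hX) (hwY hZ), integral_sub (hwY hR') (hwY hZ),
    setIntegral_mul_eq_of_ae_eq_condExp_cond hm hw hX (hwY hX) hR]

theorem setIntegral_mul_sub_eq_add_of_ae_eq_condExp_cond (hm : m ≤ mΩ) {w v Z : Ω → ℝ}
    {c d : ℝ} (hw : StronglyMeasurable[m] w) (hwc : ∀ᵐ ω ∂P, ‖w ω‖ ≤ c)
    (hv : AEStronglyMeasurable v P) (hvd : ∀ᵐ ω ∂P, ‖v ω‖ ≤ d) (hX : IntegrableOn X s P)
    (hZ : IntegrableOn Z s P) (hR : R =ᵐ[P[|s]] P[|s][X|m]) :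
    ∫ ω in s, w ω * (X ω - Z ω) ∂P
      = ∫ ω in s, (w ω - v ω) * (R ω - Z ω) ∂P + ∫ ω in s, v ω * (R ω - Z ω) ∂P := by
  have hRZ : IntegrableOn (fun ω => R ω - Z ω) s P :=
    (integrable_cond_iff_integrableOn.1 (integrable_condExp.congr hR.symm)).sub hZ
  have hwv : ∀ᵐ ω ∂P, ‖w ω - v ω‖ ≤ c + d := by
    filter_upwards [hwc, hvd] with ω hwω hvω
    exact (norm_sub_le _ _).trans (add_le_add hwω hvω)
  have hwvRZ : IntegrableOn (fun ω => (w ω - v ω) * (R ω - Z ω)) s P :=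
    hRZ.bdd_mul ((hw.mono hm).aestronglyMeasurable.sub hv).restrict (ae_restrict_of_ae hwv)
  have hvRZ : IntegrableOn (fun ω => v ω * (R ω - Z ω)) s P :=
    hRZ.bdd_mul hv.restrict (ae_restrict_of_ae hvd)
  rw [setIntegral_mul_sub_eq_of_ae_eq_condExp_cond hm hw hwc hX hZ hR,
    ← integral_add hwvRZ hvRZ]
  congr 1 with ω
  ring

variable {C D : Set Ω} {p F : Ω → ℝ}

theorem integrableOn_mul_of_ae_eq_condExp_indicator (hC : MeasurableSet C) (hCD : C ⊆ D)
    (hF : StronglyMeasurable[m] F) (hFC : IntegrableOn F C P)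
    (hp : p =ᵐ[P[|D]] P[|D][C.indicator (fun _ => (1 : ℝ))|m]) :
    IntegrableOn (fun ω => F ω * p ω) D P :=
  integrableOn_mul_of_ae_eq_condExp_cond hF ((integrable_const 1).indicator hC).integrableOn
    (by rw [mul_indicator_one_eq_indicator]; exact hFC.indicator_of_subset hC hCD) hp

theorem setIntegral_eq_setIntegral_mul_of_ae_eq_condExp_indicator (hm : m ≤ mΩ)
    (hC : MeasurableSet C) (hCD : C ⊆ D) (hF : StronglyMeasurable[m] F)
    (hFC : IntegrableOn F C P) (hp : p =ᵐ[P[|D]] P[|D][C.indicator (fun _ => (1 : ℝ))|m]) :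
    ∫ ω in C, F ω ∂P = ∫ ω in D, F ω * p ω ∂P := by
  rw [← setIntegral_mul_eq_of_ae_eq_condExp_cond hm hF
    ((integrable_const 1).indicator hC).integrableOn
    (by rw [mul_indicator_one_eq_indicator]; exact hFC.indicator_of_subset hC hCD) hp,
    mul_indicator_one_eq_indicator, setIntegral_indicator hC, Set.inter_eq_right.2 hCD]

theorem MeasureTheory.IntegrableOn.of_subset_of_ae_eq_condExp_indicator (hm : m ≤ mΩ) {ε : ℝ}
    (hε : 0 < ε) (hC : MeasurableSet C) (hCD : C ⊆ D) (hF : Measurable[m] F)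
    (hFC : IntegrableOn F C P) (hpm : Measurable[m] p) (hpε : ∀ᵐ ω ∂P.restrict D, ε ≤ p ω)
    (hp : p =ᵐ[P[|D]] P[|D][C.indicator (fun _ => (1 : ℝ))|m]) :
    IntegrableOn F D P := by
  -- `F / p` is integrable on `C` because `p ≥ ε`, and the tower identity transfers
  -- the integrability of `(F / p) * p = F` to `D`.
  have hpC : ∀ᵐ ω ∂P.restrict C, ε ≤ p ω := ae_restrict_of_ae_restrict_of_subset hCD hpε
  have hFp : IntegrableOn (fun ω => F ω / p ω) C P := by
    refine (hFC.bdd_mul (c := ε⁻¹) (hpm.mono hm le_rfl).inv.aestronglyMeasurable ?_).congr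
      (.of_forall fun ω => (div_eq_inv_mul _ _).symm)
    filter_upwards [hpC] with ω hω
    rw [Pi.inv_apply, norm_inv, Real.norm_of_nonneg (hε.le.trans hω)]
    exact inv_anti₀ hε hω
  refine (integrableOn_mul_of_ae_eq_condExp_indicator hC hCD (hF.div hpm).stronglyMeasurable
    hFp hp).congr_fun_ae ?_
  filter_upwards [hpε] with ω hω
  exact div_mul_cancel₀ _ (hε.trans_le hω).ne'

theorem setIntegral_inv_mul_mul_eq_of_ae_eq_condExp_indicator (hm : m ≤ mΩ)
    (hC : MeasurableSet C) (hCD : C ⊆ D) {G X : Ω → ℝ} (hG : Measurable[m] G)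
    (hpm : Measurable[m] p) (hX : Measurable[m] X) (hp0 : ∀ᵐ ω ∂P.restrict D, p ω ≠ 0)
    (hint : IntegrableOn (fun ω => (G ω * p ω)⁻¹ * X ω) C P)
    (hp : p =ᵐ[P[|D]] P[|D][C.indicator (fun _ => (1 : ℝ))|m]) :
    ∫ ω in C, (G ω * p ω)⁻¹ * X ω ∂P = ∫ ω in D, (G ω)⁻¹ * X ω ∂P := by
  rw [setIntegral_eq_setIntegral_mul_of_ae_eq_condExp_indicator
    (F := fun ω => (G ω * p ω)⁻¹ * X ω) hm hC hCD ((hG.mul hpm).inv.mul hX).stronglyMeasurable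
    hint hp]
  refine integral_congr_ae ?_
  filter_upwards [hp0] with ω hω
  field_simp

end CondExp

theorem setIntegral_inv_sub_mul_sub_eq_zero {Ω : Type*} [MeasurableSpace Ω] {μ : Measure Ω}
    {s : Set Ω} (hs : MeasurableSet s) {a b c d : Ω → ℝ}
    (h : (∀ᵐ ω ∂μ, ω ∈ s → a ω = b ω) ∨ (∀ᵐ ω ∂μ, ω ∈ s → c ω = d ω)) :
    ∫ ω in s, ((a ω)⁻¹ - (b ω)⁻¹) * (d ω - c ω) ∂μ = 0 := by
  refine integral_eq_zero_of_ae ((ae_restrict_iff' hs).2 ?_)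
  rcases h with h | h <;> filter_upwards [h] with ω hω hωs <;> simp [hω hωs]

theorem integral_sum_indicator_add {Ω ι : Type*} [MeasurableSpace Ω] {μ : Measure Ω}
    (S : Finset ι) {B : ι → Set Ω} {F : ι → Ω → ℝ} {G : Ω → ℝ}
    (hB : ∀ i ∈ S, MeasurableSet (B i)) (hF : ∀ i ∈ S, IntegrableOn (F i) (B i) μ)
    (hG : Integrable G μ) :
    ∫ ω, (∑ i ∈ S, (B i).indicator (F i) ω + G ω) ∂μ
      = ∑ i ∈ S, ∫ ω in B i, F i ω ∂μ + ∫ ω, G ω ∂μ := by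
  have hind : ∀ i ∈ S, Integrable ((B i).indicator (F i)) μ :=
    fun i hi => (hF i hi).integrable_indicator (hB i hi)
  rw [integral_add (integrable_finsetSum S hind) hG, integral_finsetSum S hind]
  exact congrArg (· + _) (Finset.sum_congr rfl fun i hi => integral_indicator (hB i hi))

theorem sum_Icc_one_sub_pred_eq_sub {M : Type*} [AddCommGroup M] (A : ℕ → M) (k : ℕ) :
    ∑ m ∈ Finset.Icc 1 k, (A m - A (m - 1)) = A k - A 0 := by
  induction k with
  | zero => simp
  | succ k ih =>
    rw [Finset.sum_Icc_succ_top (by omega), ih, Nat.add_sub_cancel]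
    abel

theorem monotoneOn_Icc_of_le_succ {α : Type*} [Preorder α] {f : ℕ → α} {a b : ℕ}
    (hf : ∀ m, a ≤ m → m < b → f m ≤ f (m + 1)) : MonotoneOn f (Set.Icc a b) :=
  monotoneOn_of_le_succ Set.ordConnected_Icc fun m _ hm hm' => by
    simp only [Order.succ_eq_add_one, Set.mem_Icc] at hm hm' ⊢
    exact hf m hm.1 (by omega)

structure IsAdaptedBoundedBelow {Ω : Type*} [mΩ : MeasurableSpace Ω] (P : Measure Ω) (k : ℕ)
    (𝒲 : ℕ → MeasurableSpace Ω) (ε : ℝ) (p : ℕ → Ω → ℝ) : Prop where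
  le : ∀ m, 1 ≤ m → m ≤ k → 𝒲 m ≤ mΩ
  mono : ∀ m, 1 ≤ m → m < k → 𝒲 m ≤ 𝒲 (m + 1)
  pos : 0 < ε
  measurable : ∀ m, 1 ≤ m → m ≤ k → Measurable[𝒲 m] (p m)
  ae_ge : ∀ m, 1 ≤ m → m ≤ k → ∀ᵐ ω ∂P, ε ≤ p m ω

namespace IsAdaptedBoundedBelow

variable {Ω : Type*} [mΩ : MeasurableSpace Ω] {P : Measure Ω} {k : ℕ}
  {𝒲 : ℕ → MeasurableSpace Ω} {ε : ℝ} {p g : ℕ → Ω → ℝ}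

theorem measurable_weight (h : IsAdaptedBoundedBelow P k 𝒲 ε p)
    (hg : ∀ m ω, g m ω = ∏ s ∈ Finset.Icc 1 m, p s ω) {m n : ℕ} (hmn : m ≤ n) (hnk : n ≤ k) :
    Measurable[𝒲 n] (g m) := by
  rw [show g m = fun ω => ∏ s ∈ Finset.Icc 1 m, p s ω from funext (hg m)]
  refine Finset.measurable_prod _ fun s hs => ?_
  obtain ⟨hs1, hsm⟩ := Finset.mem_Icc.1 hs
  exact (h.measurable s hs1 (by omega)).mono
    (monotoneOn_Icc_of_le_succ h.mono ⟨hs1, by omega⟩ ⟨by omega, hnk⟩ (hsm.trans hmn)) le_rfl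

theorem aestronglyMeasurable_inv_weight (h : IsAdaptedBoundedBelow P k 𝒲 ε p)
    (hg : ∀ m ω, g m ω = ∏ s ∈ Finset.Icc 1 m, p s ω) {m : ℕ} (hm1 : 1 ≤ m) (hmk : m ≤ k) :
    AEStronglyMeasurable (fun ω => (g m ω)⁻¹) P :=
  ((h.measurable_weight hg le_rfl hmk).inv.mono (h.le m hm1 hmk) le_rfl).aestronglyMeasurable

theorem ae_norm_inv_weight_le (h : IsAdaptedBoundedBelow P k 𝒲 ε p)
    (hg : ∀ m ω, g m ω = ∏ s ∈ Finset.Icc 1 m, p s ω) {m : ℕ} (hmk : m ≤ k) :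
    ∀ᵐ ω ∂P, ‖(g m ω)⁻¹‖ ≤ (ε ^ m)⁻¹ := by
  have hp : ∀ᵐ ω ∂P, ∀ s ∈ Finset.Icc 1 m, ε ≤ p s ω :=
    (Filter.eventually_all_finset _).2 fun s hs =>
      h.ae_ge s (Finset.mem_Icc.1 hs).1 ((Finset.mem_Icc.1 hs).2.trans hmk)
  filter_upwards [hp] with ω hω
  have hle : ε ^ m ≤ g m ω :=
    calc ε ^ m = ∏ _s ∈ Finset.Icc 1 m, ε := by simp
      _ ≤ ∏ s ∈ Finset.Icc 1 m, p s ω := Finset.prod_le_prod (fun _ _ => h.pos.le) hω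
      _ = g m ω := (hg m ω).symm
  rw [norm_inv, Real.norm_of_nonneg ((pow_pos h.pos m).le.trans hle)]
  exact inv_anti₀ (pow_pos h.pos m) hle

theorem integrableOn_inv_weight_mul (h : IsAdaptedBoundedBelow P k 𝒲 ε p)
    (hg : ∀ m ω, g m ω = ∏ s ∈ Finset.Icc 1 m, p s ω) {m : ℕ} (hm1 : 1 ≤ m) (hmk : m ≤ k)
    {s : Set Ω} {X : Ω → ℝ} (hX : IntegrableOn X s P) :
    IntegrableOn (fun ω => (g m ω)⁻¹ * X ω) s P :=
  hX.bdd_mul (h.aestronglyMeasurable_inv_weight hg hm1 hmk).restrict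
    (ae_restrict_of_ae (h.ae_norm_inv_weight_le hg hmk))

theorem setIntegral_inv_weight_mul_sub_eq_add [IsFiniteMeasure P] {ghat phat : ℕ → Ω → ℝ}
    (hhat : IsAdaptedBoundedBelow P k 𝒲 ε phat) (h : IsAdaptedBoundedBelow P k 𝒲 ε p)
    (hghat : ∀ m ω, ghat m ω = ∏ s ∈ Finset.Icc 1 m, phat s ω)
    (hg : ∀ m ω, g m ω = ∏ s ∈ Finset.Icc 1 m, p s ω) {m : ℕ} (hm1 : 1 ≤ m) (hmk : m ≤ k)
    {s : Set Ω} {X Z R : Ω → ℝ} (hX : IntegrableOn X s P) (hZ : IntegrableOn Z s P)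
    (hR : R =ᵐ[P[|s]] P[|s][X|𝒲 m]) :
    ∫ ω in s, (ghat m ω)⁻¹ * (X ω - Z ω) ∂P
      = ∫ ω in s, ((ghat m ω)⁻¹ - (g m ω)⁻¹) * (R ω - Z ω) ∂P
        + ∫ ω in s, (g m ω)⁻¹ * (R ω - Z ω) ∂P :=
  setIntegral_mul_sub_eq_add_of_ae_eq_condExp_cond (h.le m hm1 hmk)
    (hhat.measurable_weight hghat le_rfl hmk).inv.stronglyMeasurable
    (hhat.ae_norm_inv_weight_le hghat hmk) (h.aestronglyMeasurable_inv_weight hg hm1 hmk)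
    (h.ae_norm_inv_weight_le hg hmk) hX hZ hR

theorem integral_sum_indicator_inv_weight_mul_sub_add_eq [IsFiniteMeasure P]
    {ghat phat : ℕ → Ω → ℝ} (hhat : IsAdaptedBoundedBelow P k 𝒲 ε phat)
    (h : IsAdaptedBoundedBelow P k 𝒲 ε p)
    (hghat : ∀ m ω, ghat m ω = ∏ s ∈ Finset.Icc 1 m, phat s ω)
    (hg : ∀ m ω, g m ω = ∏ s ∈ Finset.Icc 1 m, p s ω) {B : ℕ → Set Ω}
    (hB : ∀ m, m ≤ k → MeasurableSet (B m)) {Z Zbar : ℕ → Ω → ℝ}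
    (hZ : ∀ m, 1 ≤ m → m ≤ k + 1 → Integrable (Z m) P)
    (hZbar : ∀ m, 1 ≤ m → m ≤ k → Zbar m =ᵐ[P[|B m]] P[|B m][Z (m + 1)|𝒲 m]) :
    ∫ ω, (∑ m ∈ Finset.Icc 1 k,
        (B m).indicator (fun ω' => (ghat m ω')⁻¹ * (Z (m + 1) ω' - Z m ω')) ω + Z 1 ω) ∂P
      = ∑ m ∈ Finset.Icc 1 k, ∫ ω in B m, ((ghat m ω)⁻¹ - (g m ω)⁻¹) * (Zbar m ω - Z m ω) ∂P
        + ∑ m ∈ Finset.Icc 1 k, ∫ ω in B m, (g m ω)⁻¹ * (Zbar m ω - Z m ω) ∂P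
        + ∫ ω, Z 1 ω ∂P := by
  have hterm : ∀ m ∈ Finset.Icc 1 k,
      IntegrableOn (fun ω => (ghat m ω)⁻¹ * (Z (m + 1) ω - Z m ω)) (B m) P ∧
      ∫ ω in B m, (ghat m ω)⁻¹ * (Z (m + 1) ω - Z m ω) ∂P
        = ∫ ω in B m, ((ghat m ω)⁻¹ - (g m ω)⁻¹) * (Zbar m ω - Z m ω) ∂P
          + ∫ ω in B m, (g m ω)⁻¹ * (Zbar m ω - Z m ω) ∂P := by
    intro m hm
    obtain ⟨hm1, hmk⟩ := Finset.mem_Icc.1 hm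
    have hnext := (hZ (m + 1) (by omega) (by omega)).integrableOn (s := B m)
    have hcur := (hZ m hm1 (by omega)).integrableOn (s := B m)
    exact ⟨hhat.integrableOn_inv_weight_mul hghat hm1 hmk (hnext.sub hcur),
      hhat.setIntegral_inv_weight_mul_sub_eq_add h hghat hg hm1 hmk hnext hcur (hZbar m hm1 hmk)⟩
  rw [integral_sum_indicator_add _ (fun m hm => hB m (Finset.mem_Icc.1 hm).2)
      (fun m hm => (hterm m hm).1) (hZ 1 le_rfl (by omega)),
    Finset.sum_congr rfl fun m hm => (hterm m hm).2, Finset.sum_add_distrib]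

end IsAdaptedBoundedBelow

-- `B m` is the event that the treatment history through `m` follows the regime, and `p m` is
-- the propensity of continuing to follow it at time `m`.
structure IsPropensitySequence {Ω : Type*} [MeasurableSpace Ω] (P : Measure Ω) (k : ℕ)
    (B : ℕ → Set Ω) (𝒲 : ℕ → MeasurableSpace Ω) (ε : ℝ) (p : ℕ → Ω → ℝ) : Prop
    extends IsAdaptedBoundedBelow P k 𝒲 ε p where
  measurableSet : ∀ m, m ≤ k → MeasurableSet (B m)
  subset : ∀ m, m < k → B (m + 1) ⊆ B m
  ae_eq_condExp : ∀ m, 1 ≤ m → m ≤ k →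
    p m =ᵐ[P[|B (m - 1)]] (P[|B (m - 1)])[(B m).indicator (fun _ => (1 : ℝ))|𝒲 m]

namespace IsPropensitySequence

variable {Ω : Type*} [MeasurableSpace Ω] {P : Measure Ω} [IsFiniteMeasure P] {k : ℕ}
  {B : ℕ → Set Ω} {𝒲 : ℕ → MeasurableSpace Ω} {ε : ℝ} {p g : ℕ → Ω → ℝ}

theorem integrableOn_pred_of_ae_eq_condExp (h : IsPropensitySequence P k B 𝒲 ε p) {m : ℕ}
    (hm1 : 1 ≤ m) (hmk : m ≤ k) {X Y : Ω → ℝ} (hX : Measurable[𝒲 m] X)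
    (hXY : X =ᵐ[P[|B m]] P[|B m][Y|𝒲 m]) : IntegrableOn X (B (m - 1)) P := by
  have hsub : B m ⊆ B (m - 1) := by
    simpa [Nat.sub_add_cancel hm1] using h.subset (m - 1) (by omega)
  exact (integrable_cond_iff_integrableOn.1 (integrable_condExp.congr hXY.symm)
    ).of_subset_of_ae_eq_condExp_indicator (h.le m hm1 hmk) h.pos (h.measurableSet m hmk) hsub
    hX (h.measurable m hm1 hmk) (ae_restrict_of_ae (h.ae_ge m hm1 hmk))
    (h.ae_eq_condExp m hm1 hmk)

theorem setIntegral_inv_weight_mul_succ (h : IsPropensitySequence P k B 𝒲 ε p)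
    (hg : ∀ m ω, g m ω = ∏ s ∈ Finset.Icc 1 m, p s ω) {m : ℕ} (hmk : m + 1 ≤ k) {X : Ω → ℝ}
    (hX : Measurable[𝒲 (m + 1)] X) (hXint : IntegrableOn X (B (m + 1)) P) :
    ∫ ω in B (m + 1), (g (m + 1) ω)⁻¹ * X ω ∂P = ∫ ω in B m, (g m ω)⁻¹ * X ω ∂P := by
  have hg_succ : ∀ ω, g (m + 1) ω = g m ω * p (m + 1) ω := fun ω => by
    rw [hg, hg, Finset.prod_Icc_succ_top (by omega)]
  have hint := h.integrableOn_inv_weight_mul hg (Nat.le_add_left 1 m) hmk hXint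
  have hp := h.ae_eq_condExp (m + 1) (by omega) hmk
  rw [Nat.add_sub_cancel] at hp
  simp_rw [hg_succ] at hint ⊢
  exact setIntegral_inv_mul_mul_eq_of_ae_eq_condExp_indicator (h.le _ (by omega) hmk)
    (h.measurableSet _ hmk) (h.subset m hmk) (h.measurable_weight hg (Nat.le_succ m) hmk)
    (h.measurable _ (by omega) hmk) hX
    (ae_restrict_of_ae ((h.ae_ge _ (by omega) hmk).mono fun _ hω => (h.pos.trans_le hω).ne'))
    hint hp

theorem setIntegral_inv_weight_mul_sub_succ (h : IsPropensitySequence P k B 𝒲 ε p)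
    (hg : ∀ m ω, g m ω = ∏ s ∈ Finset.Icc 1 m, p s ω) {m : ℕ} (hmk : m + 1 ≤ k)
    {Z Z' R : Ω → ℝ} (hZ : Measurable[𝒲 (m + 1)] Z) (hZint : IntegrableOn Z (B m) P)
    (hZ'int : IntegrableOn Z' (B (m + 1)) P)
    (hR : R =ᵐ[P[|B (m + 1)]] P[|B (m + 1)][Z'|𝒲 (m + 1)]) :
    ∫ ω in B (m + 1), (g (m + 1) ω)⁻¹ * (R ω - Z ω) ∂P
      = ∫ ω in B (m + 1), (g (m + 1) ω)⁻¹ * Z' ω ∂P - ∫ ω in B m, (g m ω)⁻¹ * Z ω ∂P := by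
  have hZint' : IntegrableOn Z (B (m + 1)) P := hZint.mono_set (h.subset m hmk)
  rw [← setIntegral_mul_sub_eq_of_ae_eq_condExp_cond (w := fun ω => (g (m + 1) ω)⁻¹)
    (h.le _ (by omega) hmk) (h.measurable_weight hg le_rfl hmk).inv.stronglyMeasurable
    (h.ae_norm_inv_weight_le hg hmk) hZ'int hZint' hR,
    ← h.setIntegral_inv_weight_mul_succ hg hmk hZ hZint',
    ← integral_sub (h.integrableOn_inv_weight_mul hg (by omega) hmk hZ'int)
      (h.integrableOn_inv_weight_mul hg (by omega) hmk hZint')]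
  simp only [mul_sub]

theorem sum_setIntegral_inv_weight_mul_sub (h : IsPropensitySequence P k B 𝒲 ε p)
    (hB0 : ∀ᵐ ω ∂P, ω ∈ B 0) (hg : ∀ m ω, g m ω = ∏ s ∈ Finset.Icc 1 m, p s ω)
    {Z Zbar : ℕ → Ω → ℝ} (hZmeas : ∀ m, 1 ≤ m → m ≤ k → Measurable[𝒲 m] (Z m))
    (hZint : ∀ m, 1 ≤ m → m ≤ k + 1 → IntegrableOn (Z m) (B (m - 1)) P)
    (hZbar : ∀ m, 1 ≤ m → m ≤ k → Zbar m =ᵐ[P[|B m]] P[|B m][Z (m + 1)|𝒲 m]) :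
    ∑ m ∈ Finset.Icc 1 k, ∫ ω in B m, (g m ω)⁻¹ * (Zbar m ω - Z m ω) ∂P
      = ∫ ω in B k, (g k ω)⁻¹ * Z (k + 1) ω ∂P - ∫ ω, Z 1 ω ∂P := by
  set A : ℕ → ℝ := fun j => ∫ ω in B j, (g j ω)⁻¹ * Z (j + 1) ω ∂P
  have hterm : ∀ m ∈ Finset.Icc 1 k,
      ∫ ω in B m, (g m ω)⁻¹ * (Zbar m ω - Z m ω) ∂P = A m - A (m - 1) := by
    intro m hm
    obtain ⟨hm1, hmk⟩ := Finset.mem_Icc.1 hm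
    obtain ⟨j, rfl⟩ : ∃ j, m = j + 1 := ⟨m - 1, by omega⟩
    simpa [A] using h.setIntegral_inv_weight_mul_sub_succ hg hmk (hZmeas _ hm1 hmk)
      (by simpa using hZint (j + 1) hm1 (by omega))
      (by simpa using hZint (j + 2) (by omega) (by omega)) (hZbar _ hm1 hmk)
  have hA0 : A 0 = ∫ ω, Z 1 ω ∂P := by
    simp [A, hg, Measure.restrict_eq_self_of_ae_mem hB0]
  rw [Finset.sum_congr rfl hterm, sum_Icc_one_sub_pred_eq_sub, hA0]

end IsPropensitySequence

theorem doubly_robust_remainder_general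
    {Ω : Type*} [inst : MeasurableSpace Ω] (P : Measure Ω) [IsProbabilityMeasure P]
    (k : ℕ)
    (B : ℕ → Set Ω)
    (hBmeas : ∀ m, m ≤ k → MeasurableSet (B m))
    (hBmono : ∀ m, m < k → B (m + 1) ⊆ B m)
    (hB0 : P (B 0) = 1)
    (𝒲 : ℕ → MeasurableSpace Ω)
    (h𝒲le : ∀ m, 1 ≤ m → m ≤ k → 𝒲 m ≤ inst)
    (h𝒲mono : ∀ m, 1 ≤ m → m < k → 𝒲 m ≤ 𝒲 (m + 1))
    (ε : ℝ) (hε : 0 < ε)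
    (p : ℕ → Ω → ℝ)
    (hpmeas : ∀ m, 1 ≤ m → m ≤ k → Measurable[𝒲 m] (p m))
    (hpver : ∀ m, 1 ≤ m → m ≤ k →
      p m =ᵐ[P[|B (m - 1)]] (P[|B (m - 1)])[(B m).indicator (fun _ => (1 : ℝ))|𝒲 m])
    (hppos : ∀ m, 1 ≤ m → m ≤ k → ∀ᵐ ω ∂P, ε ≤ p m ω)
    (g : ℕ → Ω → ℝ)
    (hg : ∀ m ω, g m ω = ∏ s ∈ Finset.Icc 1 m, p s ω)
    (Y : Ω → ℝ) (hYint : Integrable Y P)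
    (Q : ℕ → Ω → ℝ)
    (hQtop : Q (k + 1) = Y)
    (hQmeas : ∀ m, 1 ≤ m → m ≤ k → Measurable[𝒲 m] (Q m))
    (hQver : ∀ m, 1 ≤ m → m ≤ k → Q m =ᵐ[P[|B m]] (P[|B m])[Q (m + 1)|𝒲 m])
    (phat : ℕ → Ω → ℝ)
    (hphatmeas : ∀ m, 1 ≤ m → m ≤ k → Measurable[𝒲 m] (phat m))
    (hphatbd : ∀ m, 1 ≤ m → m ≤ k → ∀ᵐ ω ∂P, ε ≤ phat m ω ∧ phat m ω ≤ 1)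
    (ghat : ℕ → Ω → ℝ)
    (hghat : ∀ m ω, ghat m ω = ∏ s ∈ Finset.Icc 1 m, phat s ω)
    (Qhat : ℕ → Ω → ℝ)
    (hQhattop : Qhat (k + 1) = Y)
    (hQhatmeas : ∀ m, 1 ≤ m → m ≤ k → Measurable[𝒲 m] (Qhat m))
    (hQhatbd : ∀ m, 1 ≤ m → m ≤ k → ∃ C, ∀ ω, |Qhat m ω| ≤ C)
    (Qbar : ℕ → Ω → ℝ)
    (hQbarver : ∀ m, 1 ≤ m → m ≤ k → Qbar m =ᵐ[P[|B m]] (P[|B m])[Qhat (m + 1)|𝒲 m])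
    :
    ((∫ ω, ((∑ m ∈ Finset.Icc 1 k,
        (B m).indicator (fun ω' => (ghat m ω')⁻¹ * (Qhat (m + 1) ω' - Qhat m ω')) ω)
      + Qhat 1 ω) ∂P) - (∫ ω, Q 1 ω ∂P)
    = ∑ m ∈ Finset.Icc 1 k,
        ∫ ω in B m, ((ghat m ω)⁻¹ - (g m ω)⁻¹) * (Qbar m ω - Qhat m ω) ∂P)
    ∧ ∀ m, 1 ≤ m → m ≤ k →
        ((∀ᵐ ω ∂P, ω ∈ B m → ghat m ω = g m ω)
          ∨ (∀ᵐ ω ∂P, ω ∈ B m → Qhat m ω = Qbar m ω)) →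
        ∫ ω in B m, ((ghat m ω)⁻¹ - (g m ω)⁻¹) * (Qbar m ω - Qhat m ω) ∂P = 0 := by
  refine ⟨?_, fun m _ hmk => setIntegral_inv_sub_mul_sub_eq_zero (hBmeas m hmk)⟩
  have hp : IsAdaptedBoundedBelow P k 𝒲 ε p := ⟨h𝒲le, h𝒲mono, hε, hpmeas, hppos⟩
  have hphat : IsAdaptedBoundedBelow P k 𝒲 ε phat :=
    ⟨h𝒲le, h𝒲mono, hε, hphatmeas, fun m hm1 hmk => (hphatbd m hm1 hmk).mono fun _ hω => hω.1⟩
  have h : IsPropensitySequence P k B 𝒲 ε p := ⟨hp, hBmeas, hBmono, hpver⟩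
  have hB0' : ∀ᵐ ω ∂P, ω ∈ B 0 :=
    (ae_mem_iff_measure_eq (hBmeas 0 k.zero_le).nullMeasurableSet).2 (by rw [hB0, measure_univ])
  have hQhatint : ∀ m, 1 ≤ m → m ≤ k + 1 → Integrable (Qhat m) P := by
    intro m hm1 hmk
    rcases hmk.lt_or_eq with hmk | rfl
    · obtain ⟨C, hC⟩ := hQhatbd m hm1 (by omega)
      exact ⟨((hQhatmeas m hm1 (by omega)).mono (h𝒲le m hm1 (by omega)) le_rfl
        ).aestronglyMeasurable, .of_bounded (.of_forall hC)⟩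
    · rwa [hQhattop]
  have hQint : ∀ m, 1 ≤ m → m ≤ k + 1 → IntegrableOn (Q m) (B (m - 1)) P := by
    intro m hm1 hmk
    rcases hmk.lt_or_eq with hmk | rfl
    · exact h.integrableOn_pred_of_ae_eq_condExp hm1 (by omega) (hQmeas m hm1 (by omega))
        (hQver m hm1 (by omega))
    · rw [hQtop]
      exact hYint.integrableOn
  have hQ1 := h.sum_setIntegral_inv_weight_mul_sub hB0' hg hQmeas hQint hQver
  have hQhat1 := h.sum_setIntegral_inv_weight_mul_sub hB0' hg hQhatmeas
    (fun m hm1 hmk => (hQhatint m hm1 hmk).integrableOn) hQbarver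
  simp only [sub_self, mul_zero, integral_zero, Finset.sum_const_zero] at hQ1
  rw [hphat.integral_sum_indicator_inv_weight_mul_sub_add_eq hp hghat hg hBmeas hQhatint
      hQbarver, hQhat1, hQhattop, ← hQtop]
  linarith

/-- Exact doubly-robust (product-of-errors) remainder representation:
under the core setup, the true iterated-regression recursion `Q` (with functional
`φ_{j,k} = E_P[Q 1]`), and the candidate-nuisance setup,
`E_P[φ̃] - φ_{j,k} = Σ_{m=1}^k E_P[1_{B m} ((ghat m)⁻¹ - (g m)⁻¹)(Qbar m - Qhat m)]`,
where `φ̃ = Σ_{m=1}^k 1_{B m} (ghat m)⁻¹ (Qhat (m+1) - Qhat m) + Qhat 1`. In particular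
each summand vanishes if `ghat m = g m` a.s. on `B m` or `Qhat m = Qbar m` a.s. on `B m`. -/
theorem doubly_robust_remainder
    {Ω : Type*} [inst : MeasurableSpace Ω] (P : Measure Ω) [IsProbabilityMeasure P]
    (k : ℕ) (hk : 1 ≤ k)
    (B : ℕ → Set Ω)
    (hBmeas : ∀ m, m ≤ k → MeasurableSet (B m))
    (hBmono : ∀ m, m < k → B (m + 1) ⊆ B m)
    (hB0 : P (B 0) = 1)
    (hBk : 0 < P (B k))
    (𝒲 : ℕ → MeasurableSpace Ω)
    (h𝒲le : ∀ m, 1 ≤ m → m ≤ k → 𝒲 m ≤ inst)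
    (h𝒲mono : ∀ m, 1 ≤ m → m < k → 𝒲 m ≤ 𝒲 (m + 1))
    (ε : ℝ) (hε : 0 < ε)
    (p : ℕ → Ω → ℝ)
    (hpmeas : ∀ m, 1 ≤ m → m ≤ k → Measurable[𝒲 m] (p m))
    (hpver : ∀ m, 1 ≤ m → m ≤ k →
      p m =ᵐ[P[|B (m - 1)]] (P[|B (m - 1)])[(B m).indicator (fun _ => (1 : ℝ))|𝒲 m])
    (hppos : ∀ m, 1 ≤ m → m ≤ k → ∀ᵐ ω ∂P, ε ≤ p m ω)
    (g : ℕ → Ω → ℝ)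
    (hg : ∀ m ω, g m ω = ∏ s ∈ Finset.Icc 1 m, p s ω)
    (Y : Ω → ℝ) (hYint : Integrable Y P)
    (Q : ℕ → Ω → ℝ)
    (hQtop : Q (k + 1) = Y)
    (hQmeas : ∀ m, 1 ≤ m → m ≤ k → Measurable[𝒲 m] (Q m))
    (hQver : ∀ m, 1 ≤ m → m ≤ k → Q m =ᵐ[P[|B m]] (P[|B m])[Q (m + 1)|𝒲 m])
    (phat : ℕ → Ω → ℝ)
    (hphatmeas : ∀ m, 1 ≤ m → m ≤ k → Measurable[𝒲 m] (phat m))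
    (hphatbd : ∀ m, 1 ≤ m → m ≤ k → ∀ᵐ ω ∂P, ε ≤ phat m ω ∧ phat m ω ≤ 1)
    (ghat : ℕ → Ω → ℝ)
    (hghat : ∀ m ω, ghat m ω = ∏ s ∈ Finset.Icc 1 m, phat s ω)
    (Qhat : ℕ → Ω → ℝ)
    (hQhattop : Qhat (k + 1) = Y)
    (hQhatmeas : ∀ m, 1 ≤ m → m ≤ k → Measurable[𝒲 m] (Qhat m))
    (hQhatbd : ∀ m, 1 ≤ m → m ≤ k → ∃ C, ∀ ω, |Qhat m ω| ≤ C)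
    (Qbar : ℕ → Ω → ℝ)
    (hQbarmeas : ∀ m, 1 ≤ m → m ≤ k → Measurable[𝒲 m] (Qbar m))
    (hQbarver : ∀ m, 1 ≤ m → m ≤ k → Qbar m =ᵐ[P[|B m]] (P[|B m])[Qhat (m + 1)|𝒲 m])
    :
    ((∫ ω, ((∑ m ∈ Finset.Icc 1 k,
        (B m).indicator (fun ω' => (ghat m ω')⁻¹ * (Qhat (m + 1) ω' - Qhat m ω')) ω)
      + Qhat 1 ω) ∂P) - (∫ ω, Q 1 ω ∂P)
    = ∑ m ∈ Finset.Icc 1 k,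
        ∫ ω in B m, ((ghat m ω)⁻¹ - (g m ω)⁻¹) * (Qbar m ω - Qhat m ω) ∂P)
    ∧ ∀ m, 1 ≤ m → m ≤ k →
        ((∀ᵐ ω ∂P, ω ∈ B m → ghat m ω = g m ω)
          ∨ (∀ᵐ ω ∂P, ω ∈ B m → Qhat m ω = Qbar m ω)) →
        ∫ ω in B m, ((ghat m ω)⁻¹ - (g m ω)⁻¹) * (Qbar m ω - Qhat m ω) ∂P = 0 :=
  doubly_robust_remainder_general (inst := inst) P k B hBmeas hBmono hB0 𝒲 h𝒲le h𝒲mono ε hε p hpmeas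
    hpver hppos g hg Y hYint Q hQtop hQmeas hQver phat hphatmeas hphatbd ghat hghat Qhat hQhattop
    hQhatmeas hQhatbd Qbar hQbarver
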